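/- There exist a natural number n ≥ 2, a complex n×n matrix a, and Hermitian complex n×n matrices ρ₁, ρ₂ such that tr(ρ₁·(Δρ₂)) ≠ tr((Δρ₁)*·ρ₂), where Δρ = aρa* - (1/2)a*aρ - (1/2)ρa*a. Hence the operator Δ is not symmetric with respect to the Hilbert–Schmidt inner product ⟨ρ₁,ρ₂⟩ = tr(ρ₁ρ₂). (Part of Theorem 2.2 ii).) -/
import Mathlib

open Matrix

/-- The alternative dissipation operator `Δ` of Quantum Optics (matrix version):
`Δρ = aρa* - ½a*aρ - ½ρa*a`. -/
noncomputable def dissDelta {n : ℕ} (a ρ : Matrix (Fin n) (Fin n) ℂ) : Matrix (Fin n) (Fin n) ℂ :=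
  a * ρ * aᴴ - (1/2 : ℂ) • (aᴴ * a * ρ) - (1/2 : ℂ) • (ρ * (aᴴ * a))

/-- The operator `Δ` is not symmetric with respect to the Hilbert–Schmidt inner
product: there exist `a` and Hermitian `ρ₁, ρ₂` with `tr(ρ₁·Δρ₂) ≠ tr((Δρ₁)* ρ₂)`. -/
theorem dissDelta_not_symmetric :
    ∃ (n : ℕ), 2 ≤ n ∧ ∃ (a ρ₁ ρ₂ : Matrix (Fin n) (Fin n) ℂ),
      ρ₁.IsHermitian ∧ ρ₂.IsHermitian ∧
      (ρ₁ * dissDelta a ρ₂).trace ≠ ((dissDelta a ρ₁)ᴴ * ρ₂).trace := by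
  refine ⟨2, le_refl 2, !![0,1;0,0], !![1,0;0,0], !![0,0;0,1], ?_, ?_, ?_⟩
  · ext i j; fin_cases i <;> fin_cases j <;>
      simp [Matrix.IsHermitian, Matrix.conjTranspose_apply]
  · ext i j; fin_cases i <;> fin_cases j <;>
      simp [Matrix.IsHermitian, Matrix.conjTranspose_apply]
  · have h : (!![(0:ℂ),1;0,0])ᴴ = !![0,0;1,0] := by
      ext i j; fin_cases i <;> fin_cases j <;> simp [Matrix.conjTranspose_apply]
    simp only [dissDelta, h]
    norm_num [Matrix.trace, Matrix.mul_apply, Fin.sum_univ_two, Matrix.sub_apply,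
      Matrix.smul_apply, Matrix.conjTranspose_apply]
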